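/- Let f, g : ℕ → ℝ be sequences of nonnegative real numbers, none identically zero, whose complexity classes [f] and [g] are translation invariant. Then the complexity class [f*g] of the discrete convolution is translation invariant, i.e. [n ↦ (f*g)(n+1)] = [f*g]. -/
import Mathlib


open Filter Finset

/-- The discrete convolution (Cauchy product) of two sequences. -/
def conv (f g : ℕ → ℝ) : ℕ → ℝ := fun n => ∑ s ∈ Finset.range (n + 1), f s * g (n - s)

/-- `[f] = [g]`: there are constants `c₁, c₂ > 0` with
`c₁ g(n) ≤ f(n) ≤ c₂ g(n)` for all but finitely many `n`. -/
def SameClass (f g : ℕ → ℝ) : Prop :=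
  ∃ c₁ c₂ : ℝ, 0 < c₁ ∧ 0 < c₂ ∧
    ∀ᶠ n in Filter.atTop, c₁ * g n ≤ f n ∧ f n ≤ c₂ * g n

/-- The complexity class `[f]` is translation invariant if `[n ↦ f(n+1)] = [f]`. -/
def TransInv (f : ℕ → ℝ) : Prop := SameClass (fun n => f (n + 1)) f

lemma conv_nonneg' (f g : ℕ → ℝ) (hf : ∀ n, 0 ≤ f n) (hg : ∀ n, 0 ≤ g n) (n : ℕ) :
    0 ≤ conv f g n :=
  Finset.sum_nonneg fun s _ => mul_nonneg (hf s) (hg (n - s))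

lemma key_lower (f g : ℕ → ℝ) (hf : ∀ n, 0 ≤ f n) (hg : ∀ n, 0 ≤ g n)
    (a b : ℝ) (ha : 0 ≤ a) (hb : 0 ≤ b) (Mf Mg : ℕ)
    (Hf : ∀ m, Mf ≤ m → f m ≤ a * f (m + 1))
    (Hg : ∀ m, Mg ≤ m → g m ≤ b * g (m + 1))
    (n : ℕ) (hn : Mf + Mg ≤ n) :
    conv f g n ≤ (a + b) * conv f g (n + 1) := by
  have step : ∀ s ∈ Finset.range (n + 1),
      f s * g (n - s) ≤ a * (f (s + 1) * g (n + 1 - (s + 1))) + b * (f s * g (n + 1 - s)) := by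
    intro s hs
    rw [Finset.mem_range, Nat.lt_succ_iff] at hs
    by_cases hsf : Mf ≤ s
    · have h1 : f s ≤ a * f (s + 1) := Hf s hsf
      have h2 : n + 1 - (s + 1) = n - s := by omega
      rw [h2]
      nlinarith [mul_nonneg hb (mul_nonneg (hf s) (hg (n + 1 - s))),
        mul_le_mul_of_nonneg_right h1 (hg (n - s))]
    · have hMg : Mg ≤ n - s := by omega
      have h1 : g (n - s) ≤ b * g (n - s + 1) := Hg _ hMg
      have h2 : n - s + 1 = n + 1 - s := by omega
      rw [h2] at h1
      nlinarith [mul_nonneg ha (mul_nonneg (hf (s + 1)) (hg (n + 1 - (s + 1)))),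
        mul_le_mul_of_nonneg_left h1 (hf s)]
  have e1 : conv f g (n + 1)
      = (∑ s ∈ Finset.range (n + 1), f (s + 1) * g (n + 1 - (s + 1))) + f 0 * g (n + 1 - 0) :=
    Finset.sum_range_succ' (fun s => f s * g (n + 1 - s)) (n + 1)
  have e2 : conv f g (n + 1)
      = (∑ s ∈ Finset.range (n + 1), f s * g (n + 1 - s)) + f (n + 1) * g (n + 1 - (n + 1)) :=
    Finset.sum_range_succ (fun s => f s * g (n + 1 - s)) (n + 1)
  have b1 : ∑ s ∈ Finset.range (n + 1), f (s + 1) * g (n + 1 - (s + 1)) ≤ conv f g (n + 1) := by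
    rw [e1]; nlinarith [mul_nonneg (hf 0) (hg (n + 1 - 0))]
  have b2 : ∑ s ∈ Finset.range (n + 1), f s * g (n + 1 - s) ≤ conv f g (n + 1) := by
    rw [e2]; nlinarith [mul_nonneg (hf (n + 1)) (hg (n + 1 - (n + 1)))]
  calc conv f g n ≤ ∑ s ∈ Finset.range (n + 1),
        (a * (f (s + 1) * g (n + 1 - (s + 1))) + b * (f s * g (n + 1 - s))) :=
        Finset.sum_le_sum step
    _ = a * (∑ s ∈ Finset.range (n + 1), f (s + 1) * g (n + 1 - (s + 1)))
        + b * (∑ s ∈ Finset.range (n + 1), f s * g (n + 1 - s)) := by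
        rw [Finset.sum_add_distrib, Finset.mul_sum, Finset.mul_sum]
    _ ≤ a * conv f g (n + 1) + b * conv f g (n + 1) := by
        gcongr
    _ = (a + b) * conv f g (n + 1) := by ring

lemma key_upper (f g : ℕ → ℝ) (hf : ∀ n, 0 ≤ f n) (hg : ∀ n, 0 ≤ g n)
    (a b : ℝ) (ha : 0 ≤ a) (hb : 0 ≤ b) (Mf Mg : ℕ)
    (Hf : ∀ m, Mf ≤ m → f (m + 1) ≤ a * f m)
    (Hg : ∀ m, Mg ≤ m → g (m + 1) ≤ b * g m)
    (n : ℕ) (hn : Mf + Mg ≤ n) :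
    conv f g (n + 1) ≤ (a + 2 * b) * conv f g n := by
  have e1 : conv f g (n + 1)
      = (∑ s ∈ Finset.range (n + 1), f (s + 1) * g (n + 1 - (s + 1))) + f 0 * g (n + 1 - 0) :=
    Finset.sum_range_succ' (fun s => f s * g (n + 1 - s)) (n + 1)
  -- head term
  have hhead : f 0 * g (n + 1 - 0) ≤ b * conv f g n := by
    have h1 : g (n + 1) ≤ b * g n := Hg n (by omega)
    have h2 : f 0 * g (n - 0) ≤ conv f g n := by
      refine Finset.single_le_sum (f := fun s => f s * g (n - s)) ?_ ?_
      · intro i _; exact mul_nonneg (hf i) (hg (n - i))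
      · simp
    simp only [Nat.sub_zero] at h2 ⊢
    nlinarith [hf 0]
  -- main sum, per term
  have step : ∀ s ∈ Finset.range (n + 1),
      f (s + 1) * g (n + 1 - (s + 1)) ≤ a * (f s * g (n - s))
        + b * (if s < n then f (s + 1) * g (n - (s + 1)) else 0) := by
    intro s hs
    rw [Finset.mem_range, Nat.lt_succ_iff] at hs
    have hns : n + 1 - (s + 1) = n - s := by omega
    rw [hns]
    have hite : 0 ≤ (if s < n then f (s + 1) * g (n - (s + 1)) else 0) := by
      split
      · exact mul_nonneg (hf (s + 1)) (hg (n - (s + 1)))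
      · exact le_refl 0
    by_cases hsf : Mf ≤ s
    · have h1 : f (s + 1) ≤ a * f s := Hf s hsf
      nlinarith [mul_le_mul_of_nonneg_right h1 (hg (n - s))]
    · have hsn : s < n := by omega
      rw [if_pos hsn]
      have hMg : Mg ≤ n - (s + 1) := by omega
      have h1 : g (n - (s + 1) + 1) ≤ b * g (n - (s + 1)) := Hg _ hMg
      have h2 : n - (s + 1) + 1 = n - s := by omega
      rw [h2] at h1
      nlinarith [mul_nonneg ha (mul_nonneg (hf s) (hg (n - s))),
        mul_le_mul_of_nonneg_left h1 (hf (s + 1))]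
  have sum_ite : ∑ s ∈ Finset.range (n + 1),
      (if s < n then f (s + 1) * g (n - (s + 1)) else 0)
      = ∑ s ∈ Finset.range n, f (s + 1) * g (n - (s + 1)) := by
    rw [Finset.sum_range_succ, if_neg (lt_irrefl n), add_zero]
    exact Finset.sum_congr rfl fun s hs => if_pos (Finset.mem_range.mp hs)
  have e2 : conv f g n
      = (∑ s ∈ Finset.range n, f (s + 1) * g (n - (s + 1))) + f 0 * g (n - 0) :=
    Finset.sum_range_succ' (fun s => f s * g (n - s)) n
  have btail : ∑ s ∈ Finset.range n, f (s + 1) * g (n - (s + 1)) ≤ conv f g n := by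
    rw [e2]; nlinarith [mul_nonneg (hf 0) (hg (n - 0))]
  calc conv f g (n + 1)
      = (∑ s ∈ Finset.range (n + 1), f (s + 1) * g (n + 1 - (s + 1))) + f 0 * g (n + 1 - 0) := e1
    _ ≤ (∑ s ∈ Finset.range (n + 1), (a * (f s * g (n - s))
          + b * (if s < n then f (s + 1) * g (n - (s + 1)) else 0))) + b * conv f g n :=
        add_le_add (Finset.sum_le_sum step) hhead
    _ = a * conv f g n
        + b * (∑ s ∈ Finset.range (n + 1), (if s < n then f (s + 1) * g (n - (s + 1)) else 0))
        + b * conv f g n := by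
        simp only [conv, Finset.sum_add_distrib, ← Finset.mul_sum]
    _ ≤ a * conv f g n + b * conv f g n + b * conv f g n := by
        gcongr
        rw [sum_ite]; exact btail
    _ = (a + 2 * b) * conv f g n := by ring

theorem conv_transInv
    (f g : ℕ → ℝ)
    (hf : ∀ n, 0 ≤ f n) (hg : ∀ n, 0 ≤ g n)
    (hfz : ¬ ∀ n, f n = 0) (hgz : ¬ ∀ n, g n = 0)
    (htf : TransInv f) (htg : TransInv g) :
    TransInv (conv f g) := by
  obtain ⟨c₁, c₂, hc₁, hc₂, hcf⟩ := htf
  obtain ⟨d₁, d₂, hd₁, hd₂, hcg⟩ := htg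
  rw [Filter.eventually_atTop] at hcf hcg
  obtain ⟨Mf, hMf⟩ := hcf
  obtain ⟨Mg, hMg⟩ := hcg
  have Hf1 : ∀ m, Mf ≤ m → f m ≤ c₁⁻¹ * f (m + 1) := by
    intro m hm
    rw [le_inv_mul_iff₀ hc₁]
    exact (hMf m hm).1
  have Hg1 : ∀ m, Mg ≤ m → g m ≤ d₁⁻¹ * g (m + 1) := by
    intro m hm
    rw [le_inv_mul_iff₀ hd₁]
    exact (hMg m hm).1
  have Hf2 : ∀ m, Mf ≤ m → f (m + 1) ≤ c₂ * f m := fun m hm => (hMf m hm).2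
  have Hg2 : ∀ m, Mg ≤ m → g (m + 1) ≤ d₂ * g m := fun m hm => (hMg m hm).2
  have hab : (0 : ℝ) < c₁⁻¹ + d₁⁻¹ := by positivity
  refine ⟨(c₁⁻¹ + d₁⁻¹)⁻¹, c₂ + 2 * d₂, by positivity, by positivity, ?_⟩
  rw [Filter.eventually_atTop]
  refine ⟨Mf + Mg, fun n hn => ⟨?_, ?_⟩⟩
  · have h := key_lower f g hf hg c₁⁻¹ d₁⁻¹ (le_of_lt (by positivity)) (le_of_lt (by positivity))
      Mf Mg Hf1 Hg1 n hn
    rw [inv_mul_le_iff₀ hab]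
    linarith
  · exact key_upper f g hf hg c₂ d₂ hc₂.le hd₂.le Mf Mg Hf2 Hg2 n hn
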